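/- Let β ∈ (0,1), 0 < ε₁ ≤ 1/2, ε₂ > 0, σ ≥ 4κ̃/(1−β), and x ∈ ℝ^p. Suppose the sub-sampled Hessian H(x) satisfies λ_min(H(x)) ≥ (1−ε₁)γ, and suppose the sub-sampled gradient g(x) satisfies ‖∇F(x) − g(x)‖ ≤ ε₂. Then: (i) if ‖g(x)‖ < σε₂, then ‖∇F(x)‖ < (1+σ)ε₂; (ii) if ‖g(x)‖ ≥ σε₂ and p = −H(x)⁻¹g(x), then every step size α with 0 < α ≤ (1−β)(1−ε₁)/κ satisfies the Armijo condition F(x+αp) ≤ F(x) + αβ pᵀg(x), and for any α satisfying this Armijo condition, F(x+αp) − F(x*) ≤ (1 − 8αβ/(9κ̃))(F(x) − F(x*)). -/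

import Mathlib

/-! By the Taylor bound for `∇²F ⪯ K`, the Armijo condition reduces to comparing the inexact
gradient term with the curvature `pᵀ H p ≥ (1 - ε₁) γ ‖p‖²`; the noise term `ε₂ ‖p‖` is absorbed
because `σ ε₂ ≤ ‖g‖ ≤ K̂ ‖p‖`. For the rate, Cauchy–Schwarz for the semi-inner product of
`0 ⪯ H ⪯ K̂` gives `‖g‖² ≤ K̂ pᵀ H p = -K̂ pᵀ g`, while `K̂ ≥ (1 - ε₁) γ ≥ γ / 2` forces `σ ≥ 2`,
hence `‖∇F x‖ ≤ 3/2 ‖g‖`; the Polyak–Łojasiewicz inequality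
`2 γ (F x - F x*) ≤ ‖∇F x‖² ≤ 9/4 ‖g‖²` turns the Armijo decrease `α β (-pᵀ g)` into the factor
`1 - 8 α β γ / (9 K̂)`. -/

open scoped RealInnerProductSpace

/-- The Hessian of `F : ℝ^d → ℝ` at `x`, as a continuous linear map,
obtained as the (Fréchet) derivative of the gradient. -/
noncomputable def hess {d : ℕ} (F : EuclideanSpace ℝ (Fin d) → ℝ)
    (x : EuclideanSpace ℝ (Fin d)) :
    EuclideanSpace ℝ (Fin d) →L[ℝ] EuclideanSpace ℝ (Fin d) :=
  fderiv ℝ (gradient F) x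

open Finset

lemma le_add_deriv_add_of_deriv2_le {φ φ' φ'' : ℝ → ℝ} {M : ℝ}
    (hφ : ∀ t, HasDerivAt φ (φ' t) t) (hφ' : ∀ t, HasDerivAt φ' (φ'' t) t)
    (hM : ∀ t, φ'' t ≤ M) : φ 1 ≤ φ 0 + φ' 0 + M / 2 := by
  have hψ : Antitone fun t => φ' t - M * t :=
    antitone_of_hasDerivAt_nonpos (fun t => (hφ' t).sub ((hasDerivAt_id t).const_mul M))
      fun t => by simpa using hM t
  let h t := φ t - t * φ' 0 - M * t ^ 2 / 2
  have hh t : HasDerivAt h (φ' t - φ' 0 - M * t) t :=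
    (((hφ t).sub ((hasDerivAt_id t).mul_const (φ' 0))).sub
      (((hasDerivAt_pow 2 t).const_mul M).div_const 2)).congr_deriv (by simp; ring)
  obtain ⟨c, hc, hslope⟩ := exists_hasDerivAt_eq_slope h _ one_pos
    (fun t _ => (hh t).continuousAt.continuousWithinAt) fun t _ => hh t
  have : φ' c - M * c ≤ φ' 0 - M * 0 := hψ hc.1.le
  simp only [h, sub_zero, div_one] at hslope
  nlinarith

lemma le_of_forall_mul_norm_sq_le {E : Type*} [NormedAddCommGroup E] [Nontrivial E] {m M : ℝ}
    (h : ∀ v : E, m * ‖v‖ ^ 2 ≤ M * ‖v‖ ^ 2) : m ≤ M := by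
  obtain ⟨v, hv⟩ := exists_ne (0 : E)
  exact le_of_mul_le_mul_right (h v) (by positivity)

section QuadraticForm

variable {E : Type*} [NormedAddCommGroup E] [InnerProductSpace ℝ E]

/-- Cauchy–Schwarz for the semi-inner product `⟪T ·, ·⟫`, applied to `T p` and `p`. -/
lemma ContinuousLinearMap.IsPositive.norm_apply_sq_le {T : E →L[ℝ] E} (hT : T.IsPositive)
    {M : ℝ} (hM : ∀ v, ⟪T v, v⟫ ≤ M * ‖v‖ ^ 2) (p : E) :
    ‖T p‖ ^ 2 ≤ M * ⟪T p, p⟫ := by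
  have hquad : ∀ t : ℝ, 0 ≤ ⟪T (T p), T p⟫ * (t * t) + 2 * ‖T p‖ ^ 2 * t + ⟪T p, p⟫ := by
    intro t
    have := hT.inner_nonneg_left (p + t • T p)
    rw [map_add, map_smul, inner_add_left, inner_add_right, inner_add_right, inner_smul_left,
      inner_smul_right, inner_smul_left, inner_smul_right, hT.inner_left_eq_inner_right (T p) p,
      real_inner_self_eq_norm_sq] at this
    simp only [conj_trivial] at this
    linarith
  have hdisc := discrim_le_zero hquad
  rw [discrim] at hdisc
  rcases eq_or_ne (T p) 0 with h0 | h0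
  · simp [h0]
  have hb : 0 < ‖T p‖ ^ 2 := by positivity
  have hac := mul_le_mul_of_nonneg_right (hM (T p)) (hT.inner_nonneg_left p)
  nlinarith

lemma ContinuousLinearMap.IsPositive.norm_apply_le {T : E →L[ℝ] E} (hT : T.IsPositive)
    {M : ℝ} (hM : ∀ v, ⟪T v, v⟫ ≤ M * ‖v‖ ^ 2) (hM₀ : 0 ≤ M) (p : E) : ‖T p‖ ≤ M * ‖p‖ := by
  refine le_of_sq_le_sq ?_ (by positivity)
  calc ‖T p‖ ^ 2 ≤ M * ⟪T p, p⟫ := hT.norm_apply_sq_le hM p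
    _ ≤ M * (M * ‖p‖ ^ 2) := by gcongr; exact hM p
    _ = (M * ‖p‖) ^ 2 := by ring

lemma inner_inv_smul_sum_apply_le {s : ℕ} (hs : 0 < s) {T : Fin s → E →L[ℝ] E}
    {c : Fin s → ℝ} (hT : ∀ j v, ⟪T j v, v⟫ ≤ c j * ‖v‖ ^ 2) {M : ℝ} (hc : ∑ j, c j ≤ s * M)
    (v : E) : ⟪((s : ℝ)⁻¹ • ∑ j, T j) v, v⟫ ≤ M * ‖v‖ ^ 2 := by
  calc ⟪((s : ℝ)⁻¹ • ∑ j, T j) v, v⟫ = (s : ℝ)⁻¹ * ∑ j, ⟪T j v, v⟫ := by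
        simp only [FunLike.coe_smul, FunLike.coe_sum, Pi.smul_apply,
          Finset.sum_apply, real_inner_smul_left, sum_inner]
    _ ≤ (s : ℝ)⁻¹ * ((s * M) * ‖v‖ ^ 2) := by
        gcongr
        calc ∑ j, ⟪T j v, v⟫ ≤ ∑ j, c j * ‖v‖ ^ 2 := sum_le_sum fun j _ => hT j v
          _ = (∑ j, c j) * ‖v‖ ^ 2 := (sum_mul ..).symm
          _ ≤ (s * M) * ‖v‖ ^ 2 := by gcongr
    _ = M * ‖v‖ ^ 2 := by field_simp

end QuadraticForm

lemma Finset.sum_le_sum_of_card_eq_of_forall_le {ι : Type*} [DecidableEq ι] {K : ι → ℝ}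
    {Q T : Finset ι} (hcard : #T = #Q) (hQ : ∀ i ∈ Q, ∀ j ∉ Q, K j ≤ K i) :
    ∑ i ∈ T, K i ≤ ∑ i ∈ Q, K i := by
  have hsd : #(T \ Q) = #(Q \ T) := card_sdiff_comm hcard
  have hdiff : ∑ i ∈ T \ Q, K i ≤ ∑ i ∈ Q \ T, K i := by
    rcases (Q \ T).eq_empty_or_nonempty with h | h
    · rw [h, card_empty, card_eq_zero] at hsd
      simp [h, hsd]
    obtain ⟨b, hb, hbmin⟩ := exists_min_image (Q \ T) K h
    calc ∑ i ∈ T \ Q, K i ≤ #(T \ Q) • K b :=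
          sum_le_card_nsmul _ _ _ fun a ha => hQ b (mem_sdiff.1 hb).1 a (mem_sdiff.1 ha).2
      _ = #(Q \ T) • K b := by rw [hsd]
      _ ≤ ∑ i ∈ Q \ T, K i := card_nsmul_le_sum _ _ _ hbmin
  rw [← sum_inter_add_sum_sdiff T Q, ← sum_inter_add_sum_sdiff Q T, inter_comm]
  linarith

/-- `Khat` is the curvature constant `K̂` attached to the Hessian sample `S`: the average of the
`s` largest `K i` when `S` has distinct indices, and `max K i` otherwise. -/
def IsSampleCurvatureBound {n s : ℕ} (K : Fin n → ℝ) (S : Fin s → Fin n) (Khat : ℝ) : Prop :=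
  (Function.Injective S ∧ ∃ Q : Finset (Fin n), Q.card = s ∧
      (∀ i ∈ Q, ∀ j ∉ Q, K j ≤ K i) ∧ Khat = (∑ i ∈ Q, K i) / s) ∨
  (¬ Function.Injective S ∧ (∀ i, K i ≤ Khat) ∧ ∃ i, Khat = K i)

lemma IsSampleCurvatureBound.sum_le {n s : ℕ} {K : Fin n → ℝ} {S : Fin s → Fin n} {Khat : ℝ}
    (h : IsSampleCurvatureBound K S Khat) : ∑ j, K (S j) ≤ s * Khat := by
  rcases h with ⟨hS, Q, hQcard, hQ, rfl⟩ | ⟨-, hK, -⟩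
  · rw [mul_div_cancel_of_imp' fun hs => by simp_all [Nat.cast_eq_zero, card_eq_zero],
      ← sum_image fun a _ b _ hab => hS hab]
    refine sum_le_sum_of_card_eq_of_forall_le ?_ hQ
    rw [card_image_of_injective _ hS, card_univ, Fintype.card_fin, hQcard]
  · simpa using sum_le_sum fun j (_ : j ∈ univ) => hK (S j)

section SecondOrder

variable {d : ℕ}
local notation "E" => EuclideanSpace ℝ (Fin d)

lemma inner_hess_apply (F : E → ℝ) (y v w : E) :
    ⟪hess F y v, w⟫ = fderiv ℝ (fderiv ℝ F) y v w := by
  rw [hess, show gradient F = (InnerProductSpace.toDual ℝ E).symm ∘ fderiv ℝ F from rfl,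
    LinearIsometryEquiv.comp_fderiv]
  exact InnerProductSpace.toDual_symm_apply

lemma isPositive_hess {F : E → ℝ} (hF : ContDiff ℝ 2 F) {y : E}
    (h : ∀ v, 0 ≤ ⟪hess F y v, v⟫) : (hess F y).IsPositive := by
  refine (ContinuousLinearMap.isPositive_iff _).2 ⟨fun v w => ?_, h⟩
  show ⟪hess F y v, w⟫ = ⟪v, hess F y w⟫
  rw [← real_inner_comm v, inner_hess_apply, inner_hess_apply]
  exact (hF.contDiffAt.isSymmSndFDerivAt (by simp)).eq v w

lemma hasFDerivAt_gradient {F : E → ℝ} (hF : ContDiff ℝ 2 F) (y : E) :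
    HasFDerivAt (gradient F) (hess F y) y := by
  have : Differentiable ℝ (fderiv ℝ F) := (hF.fderiv_right le_rfl).differentiable one_ne_zero
  exact ((InnerProductSpace.toDual ℝ E).symm.differentiable.comp this y).hasFDerivAt

lemma hasDerivAt_add_smul (x v : E) (t : ℝ) : HasDerivAt (fun t : ℝ => x + t • v) v t := by
  simpa using ((hasDerivAt_id t).smul_const v).const_add x

lemma hasDerivAt_apply_add_smul {F : E → ℝ} (hF : ContDiff ℝ 2 F) (x v : E) (t : ℝ) :
    HasDerivAt (fun t : ℝ => F (x + t • v)) ⟪gradient F (x + t • v), v⟫ t := by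
  rw [inner_gradient_left]
  exact ((hF.differentiable two_ne_zero) _).hasFDerivAt.comp_hasDerivAt t
    (hasDerivAt_add_smul x v t)

lemma hasDerivAt_inner_gradient_add_smul {F : E → ℝ} (hF : ContDiff ℝ 2 F) (x v : E) (t : ℝ) :
    HasDerivAt (fun t : ℝ => ⟪gradient F (x + t • v), v⟫) ⟪hess F (x + t • v) v, v⟫ t := by
  have := ((hasFDerivAt_gradient hF _).comp_hasDerivAt t
    (hasDerivAt_add_smul x v t)).inner ℝ (hasDerivAt_const t v)
  simpa using this

lemma apply_add_le_of_inner_hess_le {F : E → ℝ} (hF : ContDiff ℝ 2 F) {M : ℝ}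
    (hM : ∀ y v, ⟪hess F y v, v⟫ ≤ M * ‖v‖ ^ 2) (x v : E) :
    F (x + v) ≤ F x + ⟪gradient F x, v⟫ + M * ‖v‖ ^ 2 / 2 := by
  simpa using le_add_deriv_add_of_deriv2_le (hasDerivAt_apply_add_smul hF x v)
    (hasDerivAt_inner_gradient_add_smul hF x v) fun _ => hM _ v

lemma le_apply_add_of_le_inner_hess {F : E → ℝ} (hF : ContDiff ℝ 2 F) {m : ℝ}
    (hm : ∀ y v, m * ‖v‖ ^ 2 ≤ ⟪hess F y v, v⟫) (x v : E) :
    F x + ⟪gradient F x, v⟫ + m * ‖v‖ ^ 2 / 2 ≤ F (x + v) := by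
  have := le_add_deriv_add_of_deriv2_le (fun t => (hasDerivAt_apply_add_smul hF x v t).neg)
    (fun t => (hasDerivAt_inner_gradient_add_smul hF x v t).neg) fun _ => neg_le_neg (hm _ v)
  simp only [Pi.neg_apply, zero_smul, add_zero, one_smul] at this
  linarith

/-- Polyak–Łojasiewicz inequality for a `γ`-strongly convex function. -/
lemma two_mul_sub_le_norm_gradient_sq {F : E → ℝ} (hF : ContDiff ℝ 2 F) {γ : ℝ} (hγ : 0 ≤ γ)
    (hγF : ∀ y v, γ * ‖v‖ ^ 2 ≤ ⟪hess F y v, v⟫) (x y : E) :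
    2 * γ * (F x - F y) ≤ ‖gradient F x‖ ^ 2 := by
  have htaylor := le_apply_add_of_le_inner_hess hF hγF x (y - x)
  rw [add_sub_cancel] at htaylor
  have hcs := neg_le_of_abs_le (abs_real_inner_le_norm (gradient F x) (y - x))
  nlinarith [sq_nonneg (γ * ‖y - x‖ - ‖gradient F x‖)]

variable {F : EuclideanSpace ℝ (Fin d) → ℝ} {x p g : EuclideanSpace ℝ (Fin d)}
  {γ Kc Khat β ε₁ ε₂ σ α : ℝ}

lemma armijo_of_step_le (hF : ContDiff ℝ 2 F) (hFup : ∀ y v, ⟪hess F y v, v⟫ ≤ Kc * ‖v‖ ^ 2)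
    (hdesc : (1 - ε₁) * γ * ‖p‖ ^ 2 ≤ -⟪p, g⟫) (hgp : ‖g‖ ≤ Khat * ‖p‖)
    (hg : ‖gradient F x - g‖ ≤ ε₂) (hgσ : σ * ε₂ ≤ ‖g‖) (hσ : 4 * Khat ≤ σ * (1 - β) * γ)
    (hσ₀ : 0 < σ) (hε₁ : ε₁ ≤ 1 / 2) (hβ : β < 1) (hγ : 0 < γ) (hα : 0 < α)
    (hαK : α * Kc ≤ (1 - β) * (1 - ε₁) * γ) :
    F (x + α • p) ≤ F x + α * β * ⟪p, g⟫ := by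
  have htaylor := apply_add_le_of_inner_hess_le hF hFup x (α • p)
  rw [norm_smul, inner_smul_right, Real.norm_of_nonneg hα.le] at htaylor
  have hgrad : ⟪gradient F x, p⟫ ≤ ⟪p, g⟫ + ε₂ * ‖p‖ := by
    have := real_inner_le_norm (gradient F x - g) p
    rw [inner_sub_left, real_inner_comm p g] at this
    nlinarith [norm_nonneg p]
  have hnoise : ε₂ * ‖p‖ ≤ (1 - β) * γ * ‖p‖ ^ 2 / 4 := by
    refine le_of_mul_le_mul_left ?_ hσ₀
    nlinarith [norm_nonneg p]
  have hcurv : α * Kc * ‖p‖ ^ 2 ≤ (1 - β) * (1 - ε₁) * γ * ‖p‖ ^ 2 := by gcongr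
  have hε₁γ : 0 ≤ (1 - β) * γ * ‖p‖ ^ 2 * (1 - 2 * ε₁) := by
    have : 0 ≤ 1 - 2 * ε₁ := by linarith
    have : 0 ≤ 1 - β := by linarith
    positivity
  have hdesc' := mul_le_mul_of_nonneg_left hdesc (by linarith : (0 : ℝ) ≤ 1 - β)
  have hstep : ⟪gradient F x, p⟫ + α * Kc * ‖p‖ ^ 2 / 2 ≤ β * ⟪p, g⟫ := by linarith
  calc F (x + α • p) ≤ F x + α * (⟪gradient F x, p⟫ + α * Kc * ‖p‖ ^ 2 / 2) := by linarith
    _ ≤ F x + α * β * ⟪p, g⟫ := by nlinarith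

lemma sub_le_mul_sub_of_armijo (hF : ContDiff ℝ 2 F)
    (hFlow : ∀ y v, γ * ‖v‖ ^ 2 ≤ ⟪hess F y v, v⟫) (hγ : 0 < γ) (hKhat : 0 < Khat)
    (hα : 0 ≤ α) (hβ : 0 ≤ β) (harm : F (x + α • p) ≤ F x + α * β * ⟪p, g⟫)
    (hg2 : ‖g‖ ^ 2 ≤ Khat * -⟪p, g⟫) (hgrad : ‖gradient F x‖ ≤ 3 / 2 * ‖g‖) (xstar : E) :
    F (x + α • p) - F xstar ≤ (1 - 8 * α * β / (9 * (Khat / γ))) * (F x - F xstar) := by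
  have hpl := two_mul_sub_le_norm_gradient_sq hF hγ.le hFlow x xstar
  have hdecr : 8 * γ * (F x - F xstar) / (9 * Khat) ≤ -⟪p, g⟫ := by
    rw [div_le_iff₀ (by positivity)]
    nlinarith [norm_nonneg (gradient F x)]
  calc F (x + α • p) - F xstar ≤ F x - F xstar - α * β * (-⟪p, g⟫) := by linarith
    _ ≤ F x - F xstar - α * β * (8 * γ * (F x - F xstar) / (9 * Khat)) := by gcongr
    _ = (1 - 8 * α * β / (9 * (Khat / γ))) * (F x - F xstar) := by field_simp

end SecondOrder

theorem stmt_9_general {d n s sg : ℕ} (hs : 0 < s)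
    (f : Fin n → EuclideanSpace ℝ (Fin d) → ℝ) (K : Fin n → ℝ)
    (F : EuclideanSpace ℝ (Fin d) → ℝ)
    (γ Kc β ε₁ ε₂ σ Khat : ℝ) (x xstar p : EuclideanSpace ℝ (Fin d))
    (S : Fin s → Fin n) (Sg : Fin sg → Fin n)
    -- each fᵢ is twice continuously differentiable, convex, with `∇²fᵢ ⪯ Kᵢ I`
    (hf : ∀ i, ContDiff ℝ 2 (f i))
    (hfpsd : ∀ i y v, 0 ≤ ⟪(hess (f i) y) v, v⟫)
    (hfK : ∀ i y v, ⟪(hess (f i) y) v, v⟫ ≤ K i * ‖v‖ ^ 2)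
    -- `F = (1/n) ∑ fᵢ`
    (hF : ∀ y, F y = (1 / n : ℝ) * ∑ i, f i y)
    -- `γ I ⪯ ∇²F ⪯ K I` with `0 < γ ≤ K`
    (hγ : 0 < γ) (hγK : γ ≤ Kc)
    (hFlow : ∀ y v, γ * ‖v‖ ^ 2 ≤ ⟪(hess F y) v, v⟫)
    (hFup : ∀ y v, ⟪(hess F y) v, v⟫ ≤ Kc * ‖v‖ ^ 2)
    (hβ : 0 < β) (hβ1 : β < 1) (hε₁half : ε₁ ≤ 1 / 2) (hε₂ : 0 < ε₂)
    -- `Khat = K̂_{|S|}` if the Hessian sample is without replacement (distinct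
    -- indices), and `Khat = K̂₁ = max Kᵢ` otherwise; `κ̃ = Khat/γ`
    (hKhat :
      (Function.Injective S ∧ ∃ Q : Finset (Fin n), Q.card = s ∧
          (∀ i ∈ Q, ∀ j ∉ Q, K j ≤ K i) ∧ Khat = (∑ i ∈ Q, K i) / s) ∨
      (¬ Function.Injective S ∧ (∀ i, K i ≤ Khat) ∧ ∃ i, Khat = K i))
    -- `σ ≥ 4 κ̃ / (1-β)`
    (hσ : σ ≥ 4 * (Khat / γ) / (1 - β))
    -- `λ_min(H(x)) ≥ (1-ε₁)γ` for the sub-sampled Hessian `H(x)`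
    (hH : ∀ v, (1 - ε₁) * γ * ‖v‖ ^ 2 ≤
        ⟪((s : ℝ)⁻¹ • ∑ j, hess (f (S j)) x) v, v⟫)
    -- the sub-sampled gradient `g(x) = (1/|S_g|) ∑_{j∈S_g} ∇f_j(x)` approximates `∇F(x)`
    (hg : ‖gradient F x - (sg : ℝ)⁻¹ • ∑ j, gradient (f (Sg j)) x‖ ≤ ε₂) :
    -- (i) if the stopping criterion holds, the full gradient is small
    (‖(sg : ℝ)⁻¹ • ∑ j, gradient (f (Sg j)) x‖ < σ * ε₂ →
        ‖gradient F x‖ < (1 + σ) * ε₂) ∧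
    -- (ii) otherwise, with `p = -H(x)⁻¹ g(x)`:
    (‖(sg : ℝ)⁻¹ • ∑ j, gradient (f (Sg j)) x‖ ≥ σ * ε₂ →
      ((s : ℝ)⁻¹ • ∑ j, hess (f (S j)) x) p =
          -((sg : ℝ)⁻¹ • ∑ j, gradient (f (Sg j)) x) →
      -- any `0 < α ≤ (1-β)(1-ε₁)/κ` satisfies the Armijo condition (w.r.t. `g`)
      (∀ α : ℝ, 0 < α → α ≤ (1 - β) * (1 - ε₁) / (Kc / γ) →
          F (x + α • p) ≤
            F x + α * β * ⟪p, (sg : ℝ)⁻¹ • ∑ j, gradient (f (Sg j)) x⟫) ∧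
      -- and any `α > 0` satisfying this Armijo condition yields the stated linear rate
      (∀ α : ℝ, 0 < α →
          F (x + α • p) ≤
            F x + α * β * ⟪p, (sg : ℝ)⁻¹ • ∑ j, gradient (f (Sg j)) x⟫ →
          F (x + α • p) - F xstar ≤
            (1 - 8 * α * β / (9 * (Khat / γ))) * (F x - F xstar))) := by
  set g := (sg : ℝ)⁻¹ • ∑ j, gradient (f (Sg j)) x
  set H := (s : ℝ)⁻¹ • ∑ j, hess (f (S j)) x
  refine ⟨fun hgσ => ?_, fun hgσ hHp => ?_⟩
  · calc ‖gradient F x‖ ≤ ‖gradient F x - g‖ + ‖g‖ := norm_le_norm_sub_add _ _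
      _ < (1 + σ) * ε₂ := by linarith
  rcases subsingleton_or_nontrivial (EuclideanSpace ℝ (Fin d)) with hE | hE
  · exact ⟨fun α _ _ => by simp [Subsingleton.elim p 0],
      fun α _ _ => by simp [Subsingleton.elim x xstar, Subsingleton.elim p 0]⟩
  have hFC : ContDiff ℝ 2 F := funext hF ▸ contDiff_const.mul (ContDiff.sum fun i _ => hf i)
  have hHpos : H.IsPositive := (ContinuousLinearMap.isPositive_sum _ fun j _ =>
    isPositive_hess (hf (S j)) (hfpsd (S j) x)).smul_of_nonneg (by positivity)
  have hHle : ∀ v, ⟪H v, v⟫ ≤ Khat * ‖v‖ ^ 2 :=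
    inner_inv_smul_sum_apply_le hs (fun j => hfK (S j) x) (IsSampleCurvatureBound.sum_le hKhat)
  have hKhat_ge : (1 - ε₁) * γ ≤ Khat :=
    le_of_forall_mul_norm_sq_le fun v => (hH v).trans (hHle v)
  have hpg : ⟪H p, p⟫ = -⟪p, g⟫ := by rw [hHp, inner_neg_left, real_inner_comm]
  have hσ' : 4 * Khat ≤ σ * (1 - β) * γ := by
    rw [ge_iff_le, div_le_iff₀ (by linarith), ← mul_div_assoc, div_le_iff₀ hγ] at hσ
    linarith
  have hσ₂ : 2 ≤ σ := by
    have : 2 ≤ σ * (1 - β) := le_of_mul_le_mul_right (by nlinarith) hγ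
    nlinarith
  have hKhat₀ : 0 < Khat := by nlinarith
  have hgp : ‖g‖ ≤ Khat * ‖p‖ := by simpa [hHp] using hHpos.norm_apply_le hHle hKhat₀.le p
  have hg2 : ‖g‖ ^ 2 ≤ Khat * -⟪p, g⟫ := by
    simpa only [← hpg, hHp, norm_neg] using hHpos.norm_apply_sq_le hHle p
  have hgrad : ‖gradient F x‖ ≤ 3 / 2 * ‖g‖ := by
    linarith [norm_le_norm_sub_add (gradient F x) g, mul_le_mul_of_nonneg_right hσ₂ hε₂.le]
  refine ⟨fun α hα hαle => ?_, fun α hα harm =>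
    sub_le_mul_sub_of_armijo hFC hFlow hγ hKhat₀ hα.le hβ.le harm hg2 hgrad xstar⟩
  have hαK : α * Kc ≤ (1 - β) * (1 - ε₁) * γ := by
    rwa [le_div_iff₀ (div_pos (hγ.trans_le hγK) hγ), mul_div_assoc', div_le_iff₀ hγ] at hαle
  exact armijo_of_step_le hFC hFup (hpg ▸ hH p) hgp hg hgσ hσ' (by linarith) hε₁half hβ1 hγ hα hαK

theorem stmt_9 {d n s sg : ℕ} (hn : 0 < n) (hs : 0 < s) (hsg : 0 < sg)
    (f : Fin n → EuclideanSpace ℝ (Fin d) → ℝ) (K : Fin n → ℝ)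
    (F : EuclideanSpace ℝ (Fin d) → ℝ)
    (γ Kc β ε₁ ε₂ σ Khat : ℝ) (x xstar p : EuclideanSpace ℝ (Fin d))
    (S : Fin s → Fin n) (Sg : Fin sg → Fin n)
    -- each fᵢ is twice continuously differentiable, convex, with `∇²fᵢ ⪯ Kᵢ I`
    (hf : ∀ i, ContDiff ℝ 2 (f i))
    (hKpos : ∀ i, 0 < K i)
    (hfpsd : ∀ i y v, 0 ≤ ⟪(hess (f i) y) v, v⟫)
    (hfK : ∀ i y v, ⟪(hess (f i) y) v, v⟫ ≤ K i * ‖v‖ ^ 2)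
    -- `F = (1/n) ∑ fᵢ`
    (hF : ∀ y, F y = (1 / n : ℝ) * ∑ i, f i y)
    -- `γ I ⪯ ∇²F ⪯ K I` with `0 < γ ≤ K`
    (hγ : 0 < γ) (hγK : γ ≤ Kc)
    (hFlow : ∀ y v, γ * ‖v‖ ^ 2 ≤ ⟪(hess F y) v, v⟫)
    (hFup : ∀ y v, ⟪(hess F y) v, v⟫ ≤ Kc * ‖v‖ ^ 2)
    -- `xstar` is the (unique) minimizer of `F`
    (hmin : ∀ y, F xstar ≤ F y)
    (hβ : 0 < β) (hβ1 : β < 1) (hε₁ : 0 < ε₁) (hε₁half : ε₁ ≤ 1 / 2) (hε₂ : 0 < ε₂)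
    -- `Khat = K̂_{|S|}` if the Hessian sample is without replacement (distinct
    -- indices), and `Khat = K̂₁ = max Kᵢ` otherwise; `κ̃ = Khat/γ`
    (hKhat :
      (Function.Injective S ∧ ∃ Q : Finset (Fin n), Q.card = s ∧
          (∀ i ∈ Q, ∀ j ∉ Q, K j ≤ K i) ∧ Khat = (∑ i ∈ Q, K i) / s) ∨
      (¬ Function.Injective S ∧ (∀ i, K i ≤ Khat) ∧ ∃ i, Khat = K i))
    -- `σ ≥ 4 κ̃ / (1-β)`
    (hσ : σ ≥ 4 * (Khat / γ) / (1 - β))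
    -- `λ_min(H(x)) ≥ (1-ε₁)γ` for the sub-sampled Hessian `H(x)`
    (hH : ∀ v, (1 - ε₁) * γ * ‖v‖ ^ 2 ≤
        ⟪((s : ℝ)⁻¹ • ∑ j, hess (f (S j)) x) v, v⟫)
    -- the sub-sampled gradient `g(x) = (1/|S_g|) ∑_{j∈S_g} ∇f_j(x)` approximates `∇F(x)`
    (hg : ‖gradient F x - (sg : ℝ)⁻¹ • ∑ j, gradient (f (Sg j)) x‖ ≤ ε₂) :
    -- (i) if the stopping criterion holds, the full gradient is small
    (‖(sg : ℝ)⁻¹ • ∑ j, gradient (f (Sg j)) x‖ < σ * ε₂ →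
        ‖gradient F x‖ < (1 + σ) * ε₂) ∧
    -- (ii) otherwise, with `p = -H(x)⁻¹ g(x)`:
    (‖(sg : ℝ)⁻¹ • ∑ j, gradient (f (Sg j)) x‖ ≥ σ * ε₂ →
      ((s : ℝ)⁻¹ • ∑ j, hess (f (S j)) x) p =
          -((sg : ℝ)⁻¹ • ∑ j, gradient (f (Sg j)) x) →
      -- any `0 < α ≤ (1-β)(1-ε₁)/κ` satisfies the Armijo condition (w.r.t. `g`)
      (∀ α : ℝ, 0 < α → α ≤ (1 - β) * (1 - ε₁) / (Kc / γ) →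
          F (x + α • p) ≤
            F x + α * β * ⟪p, (sg : ℝ)⁻¹ • ∑ j, gradient (f (Sg j)) x⟫) ∧
      -- and any `α > 0` satisfying this Armijo condition yields the stated linear rate
      (∀ α : ℝ, 0 < α →
          F (x + α • p) ≤
            F x + α * β * ⟪p, (sg : ℝ)⁻¹ • ∑ j, gradient (f (Sg j)) x⟫ →
          F (x + α • p) - F xstar ≤
            (1 - 8 * α * β / (9 * (Khat / γ))) * (F x - F xstar))) :=
  stmt_9_general hs f K F γ Kc β ε₁ ε₂ σ Khat x xstar p S Sg hf hfpsd hfK hF hγ hγK hFlow hFup hβ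
    hβ1 hε₁half hε₂ hKhat hσ hH hg
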